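/- arXiv:2007.01414 — 2 statements merged into one kernel-verified Lean document; each statement's English description precedes it below -/
import Mathlib

section
/- Let E be a real vector space, A, B ⊆ E, and suppose B is a cone (λ • z ∈ B for every z ∈ B and λ ≥ 0). Then for every x ∈ E, the Minkowski gauge of the Minkowski sum A + B satisfies 𝒟_{A+B}(x) = ⨅_{z ∈ B} 𝒟_A(x − z), where the infimum is taken in [0,∞]. -/
open ENNReal Pointwise

/-- The Minkowski gauge of a set `A` in a real vector space, with values in `[0,∞]`
(the infimum of the empty set being `∞`). -/
noncomputable def mgauge {E : Type*} [AddCommGroup E] [Module ℝ E] (A : Set E) (x : E) : ℝ≥0∞ :=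
  sInf {r : ℝ≥0∞ | ∃ m : ℝ, 0 < m ∧ m⁻¹ • x ∈ A ∧ r = ENNReal.ofReal m}

theorem stmt_4 {E : Type*} [AddCommGroup E] [Module ℝ E] (A B : Set E)
    (hB : ∀ z ∈ B, ∀ l : ℝ, 0 ≤ l → l • z ∈ B) (x : E) :
    mgauge (A + B) x = ⨅ z ∈ B, mgauge A (x - z) := by
  apply le_antisymm
  · apply le_iInf₂
    intro z hz
    apply sInf_le_sInf
    rintro r ⟨m, hm, hA, rfl⟩
    refine ⟨m, hm, ?_, rfl⟩
    have : m⁻¹ • x = m⁻¹ • (x - z) + m⁻¹ • z := by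
      rw [← smul_add, sub_add_cancel]
    rw [this]
    exact Set.add_mem_add hA (hB z hz _ (inv_nonneg.mpr hm.le))
  · apply le_sInf
    rintro r ⟨m, hm, hAB, rfl⟩
    obtain ⟨a, ha, b, hb, hab⟩ := hAB
    have hzB : (m • b) ∈ B := hB b hb m hm.le
    refine le_trans (iInf₂_le (m • b) hzB) (sInf_le ⟨m, hm, ?_, rfl⟩)
    have : m⁻¹ • (x - m • b) = m⁻¹ • x - b := by
      rw [smul_sub, smul_smul, inv_mul_cancel₀ hm.ne', one_smul]
    rw [this, ← hab]
    simpa using ha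
end

section
/- Let E be a Hausdorff locally convex real topological vector space and A ⊆ E with 0 ∈ A. Then for every x ∈ E, the Minkowski gauge of the closed convex hull of A equals the convex envelope of the Minkowski gauge of A: 𝒟_{cl(conv A)}(x) = sup {g(x) : g : E → ℝ continuous affine with g(y) ≤ 𝒟_A(y) for all y ∈ E}. -/
open ENNReal

/-!
A continuous affine function `f + c` lies below `mgauge A` exactly when `f ≤ 1` on `A` and
`c ≤ 0` (the gauge is positively homogeneous and vanishes at `0 ∈ A`). The half-space
`{f ≤ 1}` is closed and convex, so it contains `A` iff it contains `closure (convexHull ℝ A)`;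
hence every such minorant is also below the gauge of the closed convex hull. Conversely, if
`mgauge (closure (convexHull ℝ A)) x > r > 0`, then `r⁻¹ • x` lies outside the closed convex
hull, and Hahn–Banach separation, normalised using `0 ∈ A`, gives `f ≤ 1` on the hull with
`f x > r`.
-/

section Gauge

variable {E : Type*} [AddCommGroup E] [Module ℝ E] {A : Set E}

theorem mgauge_le_ofReal {x : E} {m : ℝ} (hm : 0 < m) (hx : m⁻¹ • x ∈ A) :
    mgauge A x ≤ ENNReal.ofReal m :=
  sInf_le ⟨m, hm, hx, rfl⟩

theorem inv_smul_notMem_of_ofReal_lt_mgauge {x : E} {r : ℝ} (hr : 0 < r)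
    (h : ENNReal.ofReal r < mgauge A x) : r⁻¹ • x ∉ A :=
  fun hx => (mgauge_le_ofReal hr hx).not_gt h

theorem ofReal_le_mgauge_of_le_one (f : E →ₗ[ℝ] ℝ) (hf : ∀ a ∈ A, f a ≤ 1) (y : E) :
    ENNReal.ofReal (f y) ≤ mgauge A y := by
  refine le_sInf ?_
  rintro _ ⟨m, hm, hmy, rfl⟩
  have h := hf _ hmy
  rw [map_smul, smul_eq_mul, inv_mul_le_iff₀ hm, mul_one] at h
  exact ENNReal.ofReal_le_ofReal h

section AffineMinorant

variable (f : E →ₗ[ℝ] ℝ) {c : ℝ}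

theorem mul_add_le_of_ofReal_le_mgauge (h : ∀ y, ENNReal.ofReal (f y + c) ≤ mgauge A y)
    {a : E} (ha : a ∈ A) {t : ℝ} (ht : 0 < t) :
    t * f a + c ≤ t := by
  have hta : t⁻¹ • t • a ∈ A := by rwa [smul_smul, inv_mul_cancel₀ ht.ne', one_smul]
  have hle := (h (t • a)).trans (mgauge_le_ofReal ht hta)
  rwa [ENNReal.ofReal_le_ofReal_iff ht.le, map_smul, smul_eq_mul] at hle

theorem le_one_of_ofReal_le_mgauge (h : ∀ y, ENNReal.ofReal (f y + c) ≤ mgauge A y)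
    {a : E} (ha : a ∈ A) : f a ≤ 1 := by
  by_contra! h1
  have hpos : 0 < f a - 1 := by linarith
  set t := (|c| + 1) / (f a - 1)
  have ht : t * (f a - 1) = |c| + 1 := div_mul_cancel₀ _ hpos.ne'
  have hle := mul_add_le_of_ofReal_le_mgauge f h ha (by positivity : 0 < t)
  linarith [neg_abs_le c]

theorem nonpos_of_ofReal_le_mgauge (h : ∀ y, ENNReal.ofReal (f y + c) ≤ mgauge A y)
    (h0 : (0 : E) ∈ A) : c ≤ 0 :=
  le_of_forall_pos_le_add fun ε hε => by
    simpa using mul_add_le_of_ofReal_le_mgauge f h h0 hε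

end AffineMinorant

end Gauge

section Separation

variable {E : Type*} [TopologicalSpace E] [AddCommGroup E] [Module ℝ E]

theorem le_one_on_closure_convexHull {A : Set E} (f : E →L[ℝ] ℝ)
    (hf : ∀ a ∈ A, f a ≤ 1) :
    ∀ b ∈ closure (convexHull ℝ A), f b ≤ 1 :=
  closure_minimal (convexHull_min hf (convex_halfSpace_le f.isLinear 1))
    (isClosed_le f.continuous continuous_const)

theorem exists_le_one_one_lt_of_notMem [IsTopologicalAddGroup E] [ContinuousSMul ℝ E]
    [LocallyConvexSpace ℝ E] {B : Set E} (hconv : Convex ℝ B) (hclosed : IsClosed B)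
    (h0 : (0 : E) ∈ B) {z : E} (hz : z ∉ B) :
    ∃ g : E →L[ℝ] ℝ, (∀ b ∈ B, g b ≤ 1) ∧ 1 < g z := by
  obtain ⟨f, u, hfB, hfz⟩ := geometric_hahn_banach_closed_point hconv hclosed hz
  have hu : 0 < u := by simpa using hfB 0 h0
  refine ⟨u⁻¹ • f, fun b hb => ?_, ?_⟩
  · simpa [inv_mul_le_iff₀ hu] using (hfB b hb).le
  · simpa [lt_inv_mul_iff₀ hu] using hfz

end Separation

theorem stmt_5_general {E : Type*} [TopologicalSpace E] [AddCommGroup E] [Module ℝ E]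
    [IsTopologicalAddGroup E] [ContinuousSMul ℝ E] [LocallyConvexSpace ℝ E]
    (A : Set E) (h0 : (0 : E) ∈ A) (x : E) :
    mgauge (closure (convexHull ℝ A)) x =
      ⨆ f : E →L[ℝ] ℝ, ⨆ c : ℝ,
        ⨆ _ : ∀ y : E, ENNReal.ofReal (f y + c) ≤ mgauge A y,
          ENNReal.ofReal (f x + c) := by
  have hA : A ⊆ closure (convexHull ℝ A) := (subset_convexHull ℝ A).trans subset_closure
  refine le_antisymm (ENNReal.le_of_forall_nnreal_lt fun r hr => ?_)
    (iSup_le fun f => iSup_le fun c => iSup_le fun hfc => ?_)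
  · rcases (zero_le (a := r)).eq_or_lt with rfl | hr0
    · simp
    obtain ⟨g, hg, hgx⟩ := exists_le_one_one_lt_of_notMem (convex_convexHull ℝ A).closure
      isClosed_closure (hA h0)
      (inv_smul_notMem_of_ofReal_lt_mgauge (r := r) hr0 (by rwa [ofReal_coe_nnreal]))
    rw [map_smul, smul_eq_mul, lt_inv_mul_iff₀ (NNReal.coe_pos.2 hr0), mul_one] at hgx
    have hmin : ∀ y, ENNReal.ofReal (g y + 0) ≤ mgauge A y := fun y => by
      simpa using ofReal_le_mgauge_of_le_one g.toLinearMap (fun a ha => hg a (hA ha)) y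
    calc (r : ℝ≥0∞) ≤ ENNReal.ofReal (g x + 0) := by
          rw [add_zero, ← ofReal_coe_nnreal]; exact ENNReal.ofReal_le_ofReal hgx.le
      _ ≤ _ := le_iSup₂_of_le g (0 : ℝ) (le_iSup (fun _ => _) hmin)
  · have hc := nonpos_of_ofReal_le_mgauge f.toLinearMap hfc h0
    have hf := le_one_on_closure_convexHull f fun a ha =>
      le_one_of_ofReal_le_mgauge f.toLinearMap hfc ha
    calc ENNReal.ofReal (f x + c) ≤ ENNReal.ofReal (f x) :=
          ENNReal.ofReal_le_ofReal (by linarith)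
      _ ≤ _ := ofReal_le_mgauge_of_le_one f.toLinearMap hf x

/-- The Minkowski gauge of the closed convex hull of `A` equals the convex envelope of the
Minkowski gauge of `A`, i.e. the pointwise supremum of all continuous affine functions
(of the form `y ↦ f y + c` with `f` continuous linear) dominated by `mgauge A`. -/
theorem stmt_5 {E : Type*} [TopologicalSpace E] [AddCommGroup E] [Module ℝ E]
    [IsTopologicalAddGroup E] [ContinuousSMul ℝ E] [LocallyConvexSpace ℝ E] [T2Space E]
    (A : Set E) (h0 : (0 : E) ∈ A) (x : E) :
    mgauge (closure (convexHull ℝ A)) x =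
      ⨆ f : E →L[ℝ] ℝ, ⨆ c : ℝ,
        ⨆ _ : ∀ y : E, ENNReal.ofReal (f y + c) ≤ mgauge A y,
          ENNReal.ofReal (f x + c) :=
  stmt_5_general A h0 x
end
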